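/- Suppose in addition 0 < q < 1. For every integer h ≥ 1, every integer m ≥ 0 and every real number x, the series Σ_{n=0}^{∞} (−1)^n q^{nh} [n+x]_q^m converges absolutely and (1+q) · Σ_{n=0}^{∞} (−1)^n q^{nh} [n+x]_q^m = E_{m,q}^{(h,1)}(x) (with the convention [n+x]_q^0 = 1 when m = 0). -/
import Mathlib


open Finset

/-- The q-number `[x]_q = (1 - q^x)/(1 - q)`, with `q^x = exp (x * log q)` (rpow). -/
noncomputable def qNum (q x : ℝ) : ℝ := (1 - q ^ x) / (1 - q)

/-- `[l]_{-q} = (1 - (-q)^l)/(1 + q)` for a natural number `l`. -/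
noncomputable def qNumNeg (q : ℝ) (l : ℕ) : ℝ := (1 - (-q) ^ l) / (1 + q)

/-- The higher-order q-Euler polynomial
`E_{m,q}^{(h,k)}(x) = ((1+q)^k/(1-q)^m) * Σ_{j=0}^m C(m,j) (-1)^j q^{jx} / Π_{i=0}^{k-1} (1 + q^{h+j-i})`. -/
noncomputable def qE (q : ℝ) (h : ℤ) (k m : ℕ) (x : ℝ) : ℝ :=
  ((1 + q) ^ k / (1 - q) ^ m) *
    ∑ j ∈ Finset.range (m + 1),
      (m.choose j : ℝ) * (-1) ^ j * q ^ ((j : ℝ) * x) /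
        ∏ i ∈ Finset.range k, (1 + q ^ ((h : ℝ) + (j : ℝ) - (i : ℝ)))

theorem stmt_17 (q : ℝ) (hq0 : 0 < q) (hq1 : q < 1) (h : ℤ) (hh : 1 ≤ h) (m : ℕ) (x : ℝ) :
    Summable (fun n : ℕ =>
        |(-1 : ℝ) ^ n * q ^ ((n : ℤ) * h) * qNum q ((n : ℝ) + x) ^ m|) ∧
      (1 + q) * ∑' n : ℕ, (-1 : ℝ) ^ n * q ^ ((n : ℤ) * h) * qNum q ((n : ℝ) + x) ^ m
        = qE q h 1 m x := by
  have hq := hq0.le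
  set c : ℕ → ℝ := fun j => (m.choose j : ℝ) * (-1) ^ j * q ^ ((j : ℝ) * x) / (1 - q) ^ m
    with hc
  set r : ℕ → ℝ := fun j => -(q ^ ((h : ℝ) + (j : ℝ))) with hr
  have hh' : (1 : ℝ) ≤ (h : ℝ) := by exact_mod_cast hh
  have hrpos : ∀ j : ℕ, (0 : ℝ) < q ^ ((h : ℝ) + (j : ℝ)) := fun j =>
    Real.rpow_pos_of_pos hq0 _
  have hrlt : ∀ j : ℕ, ‖r j‖ < 1 := by
    intro j
    have hpos : (0 : ℝ) < (h : ℝ) + (j : ℝ) := by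
      have := Nat.cast_nonneg (α := ℝ) j
      linarith
    have := Real.rpow_lt_one hq hq1 hpos
    simpa [hr, abs_of_pos (hrpos j)] using this
  have key : ∀ n : ℕ,
      (-1 : ℝ) ^ n * q ^ ((n : ℤ) * h) * qNum q ((n : ℝ) + x) ^ m
        = ∑ j ∈ Finset.range (m + 1), c j * r j ^ n := by
    intro n
    have expand : (1 - q ^ ((n : ℝ) + x)) ^ m
        = ∑ j ∈ Finset.range (m + 1),
            (-(q ^ ((n : ℝ) + x))) ^ j * (m.choose j : ℝ) := by
      have := add_pow (-(q ^ ((n : ℝ) + x))) (1 : ℝ) m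
      simpa [neg_add_eq_sub] using this
    rw [qNum, div_pow, expand, Finset.sum_div, Finset.mul_sum]
    refine Finset.sum_congr rfl fun j hj => ?_
    simp only [hc, hr]
    rw [neg_pow (q ^ ((n : ℝ) + x)), neg_pow (q ^ ((h : ℝ) + (j : ℝ)))]
    rw [← Real.rpow_natCast (q ^ ((n : ℝ) + x)) j,
        ← Real.rpow_natCast (q ^ ((h : ℝ) + (j : ℝ))) n,
        ← Real.rpow_mul hq, ← Real.rpow_mul hq,
        ← Real.rpow_intCast q ((n : ℤ) * h),
        show (((n : ℤ) * h : ℤ) : ℝ) = (n : ℝ) * (h : ℝ) by push_cast; ring]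
    have hexp : q ^ ((n : ℝ) * (h : ℝ)) * q ^ (((n : ℝ) + x) * (j : ℝ))
        = q ^ ((j : ℝ) * x) * q ^ (((h : ℝ) + (j : ℝ)) * (n : ℝ)) := by
      rw [← Real.rpow_add hq0, ← Real.rpow_add hq0]
      congr 1; ring
    linear_combination ((-1 : ℝ) ^ n * (-1) ^ j * (m.choose j : ℝ) / (1 - q) ^ m) * hexp
  have hsum : ∀ j ∈ Finset.range (m + 1), Summable (fun n : ℕ => c j * r j ^ n) :=
    fun j _ => (summable_geometric_of_norm_lt_one (hrlt j)).mul_left _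
  have habs : Summable (fun n : ℕ => ∑ j ∈ Finset.range (m + 1), |c j| * |r j| ^ n) := by
    refine summable_sum fun j _ => ?_
    exact (summable_geometric_of_lt_one (abs_nonneg _)
      (by simpa [Real.norm_eq_abs] using hrlt j)).mul_left _
  constructor
  · refine Summable.of_nonneg_of_le (fun n => abs_nonneg _) (fun n => ?_) habs
    rw [key n]
    calc |∑ j ∈ Finset.range (m + 1), c j * r j ^ n|
        ≤ ∑ j ∈ Finset.range (m + 1), |c j * r j ^ n| := Finset.abs_sum_le_sum_abs _ _
      _ = ∑ j ∈ Finset.range (m + 1), |c j| * |r j| ^ n := by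
          simp [abs_mul, abs_pow]
  · rw [tsum_congr key, Summable.tsum_finsetSum hsum]
    have htsum : ∀ j : ℕ, ∑' n : ℕ, c j * r j ^ n = c j * (1 - r j)⁻¹ := by
      intro j
      rw [tsum_mul_left, tsum_geometric_of_norm_lt_one (hrlt j)]
    simp only [htsum]
    rw [qE, Finset.mul_sum, Finset.mul_sum]
    refine Finset.sum_congr rfl fun j hj => ?_
    have h1 : (1 : ℝ) - r j = 1 + q ^ ((h : ℝ) + (j : ℝ)) := by
      simp [hr, sub_neg_eq_add]
    rw [h1]
    have hne : (1 : ℝ) + q ^ ((h : ℝ) + (j : ℝ)) ≠ 0 := by positivity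
    have hne2 : ((1 : ℝ) - q) ^ m ≠ 0 := by
      have : (0:ℝ) < 1 - q := by linarith
      positivity
    simp only [hc, Finset.prod_range_one, pow_one, Nat.cast_zero, sub_zero]
    field_simp
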